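/- arXiv:1906.11370 — 5 statements merged into one kernel-verified Lean document; each statement's English description precedes it below -/
import Mathlib

section
/- Every unit-norm dual quaternion q (Q(q) = 1) factors as q = q_r · q_b with q_r a unit real quaternion and q_b = 1 + ε·v for some pure real quaternion v; moreover Q(q_b) = 1. -/
noncomputable section

/-- Euclidean inner product on ℍ ≅ ℝ⁴. -/
def dotQ (p q : Quaternion ℝ) : ℝ := p.re*q.re + p.imI*q.imI + p.imJ*q.imJ + p.imK*q.imK

/-- Embedding of the real quaternions into the dual quaternions ℍ(𝔻). -/
def toD (a : Quaternion ℝ) : Quaternion (DualNumber ℝ) :=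
  ⟨TrivSqZeroExt.inl a.re, TrivSqZeroExt.inl a.imI, TrivSqZeroExt.inl a.imJ, TrivSqZeroExt.inl a.imK⟩

/-- The central dual unit ε of the dual quaternions. -/
def epsQ : Quaternion (DualNumber ℝ) := ((DualNumber.eps : DualNumber ℝ) : Quaternion (DualNumber ℝ))

/-- The dual quaternion α + εβ determined by two real quaternions. -/
def bqD (a b : Quaternion ℝ) : Quaternion (DualNumber ℝ) := toD a + epsQ * toD b

/-- The element v₀ + ε·w with v₀ ∈ ℝ, w a real quaternion. -/
def mqD (v₀ : ℝ) (w : Quaternion ℝ) : Quaternion (DualNumber ℝ) :=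
  toD ((v₀ : Quaternion ℝ)) + epsQ * toD w

/-! Write q = α + εβ. Then Q(q) = 1 says αᾱ = 1 and αβ̄ + βᾱ = 0. With q_r = α and v = ᾱβ we get
q_r(1 + εv) = α + εαᾱβ = q, and conjugating the second condition by α gives v̄ + v = 0, so v is pure,
which is also exactly Q(1 + εv) = 1. Products α + εβ are computed in the dual numbers over ℍ, via
`Quaternion.dualNumberEquiv`. -/

open Quaternion TrivSqZeroExt DualNumber

theorem dualNumberEquiv_toD (a : ℍ[ℝ]) : dualNumberEquiv (toD a) = inl a := rfl

theorem dualNumberEquiv_epsQ : dualNumberEquiv epsQ = ε := by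
  ext <;> simp [epsQ]

theorem dualNumberEquiv_bqD (a b : ℍ[ℝ]) : dualNumberEquiv (bqD a b) = inl a + inr b := by
  rw [bqD, map_add, map_mul, dualNumberEquiv_toD, dualNumberEquiv_toD, dualNumberEquiv_epsQ]
  ext <;> simp

theorem bqD_inj {a b c d : ℍ[ℝ]} : bqD a b = bqD c d ↔ a = c ∧ b = d := by
  rw [← (dualNumberEquiv (R := ℝ)).injective.eq_iff, dualNumberEquiv_bqD, dualNumberEquiv_bqD,
    TrivSqZeroExt.ext_iff]
  simp

theorem exists_eq_bqD (q : ℍ[DualNumber ℝ]) : ∃ a b, q = bqD a b :=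
  ⟨_, _, dualNumberEquiv.injective <| by rw [dualNumberEquiv_bqD, inl_fst_add_inr_snd_eq]⟩

theorem bqD_mul (a b c d : ℍ[ℝ]) : bqD a b * bqD c d = bqD (a * c) (a * d + b * c) :=
  dualNumberEquiv.injective <| by
    rw [map_mul, dualNumberEquiv_bqD, dualNumberEquiv_bqD, dualNumberEquiv_bqD]
    ext <;> simp

theorem bqD_one_zero : bqD 1 0 = 1 :=
  dualNumberEquiv.injective <| by rw [dualNumberEquiv_bqD, map_one, inr_zero, add_zero, inl_one]

theorem toD_eq_bqD (a : ℍ[ℝ]) : toD a = bqD a 0 :=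
  dualNumberEquiv.injective <| by rw [dualNumberEquiv_bqD, dualNumberEquiv_toD, inr_zero, add_zero]

theorem toD_one : toD 1 = 1 := by rw [toD_eq_bqD, bqD_one_zero]

theorem one_add_epsQ_mul_toD (v : ℍ[ℝ]) : 1 + epsQ * toD v = bqD 1 v := by rw [bqD, toD_one]

theorem star_bqD (a b : ℍ[ℝ]) : star (bqD a b) = bqD (star a) (star b) := by
  ext <;> simp [← re_fst_dualNumberEquiv, ← imI_fst_dualNumberEquiv, ← imJ_fst_dualNumberEquiv,
    ← imK_fst_dualNumberEquiv, ← re_snd_dualNumberEquiv, ← imI_snd_dualNumberEquiv,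
    ← imJ_snd_dualNumberEquiv, ← imK_snd_dualNumberEquiv, dualNumberEquiv_bqD]

theorem bqD_mul_star_eq_one_iff {a b : ℍ[ℝ]} :
    bqD a b * star (bqD a b) = 1 ↔ a * star a = 1 ∧ a * star b + b * star a = 0 := by
  rw [star_bqD, bqD_mul, ← bqD_one_zero, bqD_inj]

theorem toD_mul_one_add_epsQ_mul_toD (a v : ℍ[ℝ]) :
    toD a * (1 + epsQ * toD v) = bqD a (a * v) := by
  rw [one_add_epsQ_mul_toD, toD_eq_bqD, bqD_mul, mul_one, zero_mul, add_zero]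

theorem star_mul_mem_skewAdjoint {A : Type*} [Ring A] [StarRing A] {a b : A}
    (ha : star a * a = 1) (h : a * star b + b * star a = 0) : star a * b ∈ skewAdjoint A := by
  rw [skewAdjoint.mem_iff, star_mul, star_star, eq_neg_iff_add_eq_zero]
  calc star b * a + star a * b = star a * (a * star b + b * star a) * a := by
        simp only [mul_add, add_mul, ← mul_assoc, ha, one_mul]
        simp only [mul_assoc, ha, mul_one]
    _ = 0 := by rw [h, mul_zero, zero_mul]

/-- Every unit-norm dual quaternion factors as q = q_r·(1 + ε·v) with q_r a unit real
    quaternion, v a pure real quaternion, and Q(1 + ε·v) = 1. -/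
theorem unit_dualQuaternion_decomposition (q : Quaternion (DualNumber ℝ))
    (hq : q * star q = 1) :
    ∃ (qr v : Quaternion ℝ), ‖qr‖ = 1 ∧ v.re = 0 ∧
      q = toD qr * (1 + epsQ * toD v) ∧
      (1 + epsQ * toD v) * star (1 + epsQ * toD v) = 1 := by
  obtain ⟨a, b, rfl⟩ := exists_eq_bqD q
  obtain ⟨ha, hab⟩ := bqD_mul_star_eq_one_iff.1 hq
  have ha' : star a * a = 1 := mul_eq_one_comm.1 ha
  have hv : star (star a * b) = -(star a * b) :=
    skewAdjoint.mem_iff.1 (star_mul_mem_skewAdjoint ha' hab)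
  refine ⟨a, star a * b, CStarRing.norm_of_mem_unitary (Unitary.mem_iff.2 ⟨ha', ha⟩),
    Quaternion.star_eq_neg.1 hv, ?_, ?_⟩
  · rw [toD_mul_one_add_epsQ_mul_toD, ← mul_assoc, ha, one_mul]
  · rw [one_add_epsQ_mul_toD, bqD_mul_star_eq_one_iff, hv]
    simp
end
end

section
/- Let q be a biquaternion with Q(q) = 1 and let v = v₀ + i·w with v₀ ∈ ℝ and w a pure real quaternion (a 'minquat'). Then T_q(v) := q·v·conj(q*) is again of the form v₀' + i·w' with v₀' ∈ ℝ and w' a pure real quaternion. -/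
/-!
The involution `*` is a ring automorphism of `ℍ(ℂ)` commuting with quaternionic conjugation, so
`(q v conj(q*))* = q* v* conj(q)`, which equals `conj(q v conj(q*)) = q* conj(v) conj(q)` as soon as
`v* = conj(v)`. Componentwise, `v* = conj(v)` says exactly that `v` is a real scalar plus `i` times a
pure real quaternion.
-/

noncomputable section

/-- Euclidean inner product of vector parts (ℝ³). -/
def dotV (p q : Quaternion ℝ) : ℝ := p.imI*q.imI + p.imJ*q.imJ + p.imK*q.imK

/-- Embedding of the real quaternions into the biquaternions ℍ(ℂ). -/
def toC (a : Quaternion ℝ) : Quaternion ℂ := ⟨(a.re : ℂ), a.imI, a.imJ, a.imK⟩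

/-- The central imaginary unit i of the biquaternions. -/
def qI : Quaternion ℂ := ((Complex.I : ℂ) : Quaternion ℂ)

/-- The biquaternion α + iβ determined by two real quaternions. -/
def bq (a b : Quaternion ℝ) : Quaternion ℂ := toC a + qI * toC b

/-- The involution * : complex conjugation of the coefficients. -/
def cstar (q : Quaternion ℂ) : Quaternion ℂ :=
  ⟨starRingEnd ℂ q.re, starRingEnd ℂ q.imI, starRingEnd ℂ q.imJ, starRingEnd ℂ q.imK⟩

/-- The minquat v₀ + i·w with v₀ ∈ ℝ and w a (pure) real quaternion. -/
def mq (v₀ : ℝ) (w : Quaternion ℝ) : Quaternion ℂ := ((v₀ : ℂ) : Quaternion ℂ) + qI * toC w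

/-- The action T_q(v) = q·v·conj(q*). (`star` is quaternionic conjugation.) -/
def Tq (q v : Quaternion ℂ) : Quaternion ℂ := q * v * star (cstar q)

open Quaternion

namespace Quaternion

@[simp] lemma re_toC (a : ℍ[ℝ]) : (toC a).re = a.re := rfl
@[simp] lemma imI_toC (a : ℍ[ℝ]) : (toC a).imI = a.imI := rfl
@[simp] lemma imJ_toC (a : ℍ[ℝ]) : (toC a).imJ = a.imJ := rfl
@[simp] lemma imK_toC (a : ℍ[ℝ]) : (toC a).imK = a.imK := rfl

@[simp] lemma re_cstar (x : ℍ[ℂ]) : (cstar x).re = starRingEnd ℂ x.re := rfl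
@[simp] lemma imI_cstar (x : ℍ[ℂ]) : (cstar x).imI = starRingEnd ℂ x.imI := rfl
@[simp] lemma imJ_cstar (x : ℍ[ℂ]) : (cstar x).imJ = starRingEnd ℂ x.imJ := rfl
@[simp] lemma imK_cstar (x : ℍ[ℂ]) : (cstar x).imK = starRingEnd ℂ x.imK := rfl

lemma cstar_mul (x y : ℍ[ℂ]) : cstar (x * y) = cstar x * cstar y := by
  ext <;> simp

lemma cstar_star (x : ℍ[ℂ]) : cstar (star x) = star (cstar x) := by
  ext <;> simp

lemma cstar_cstar (x : ℍ[ℂ]) : cstar (cstar x) = x := by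
  ext <;> simp

section mq

variable (v₀ : ℝ) (w : ℍ[ℝ])

@[simp] lemma re_mq : (mq v₀ w).re = ⟨v₀, w.re⟩ := by
  rw [mq, qI, coe_mul_eq_smul]
  apply Complex.ext <;> simp

@[simp] lemma imI_mq : (mq v₀ w).imI = ⟨0, w.imI⟩ := by
  rw [mq, qI, coe_mul_eq_smul]
  apply Complex.ext <;> simp

@[simp] lemma imJ_mq : (mq v₀ w).imJ = ⟨0, w.imJ⟩ := by
  rw [mq, qI, coe_mul_eq_smul]
  apply Complex.ext <;> simp

@[simp] lemma imK_mq : (mq v₀ w).imK = ⟨0, w.imK⟩ := by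
  rw [mq, qI, coe_mul_eq_smul]
  apply Complex.ext <;> simp

end mq

end Quaternion

/-- The part `β` of a biquaternion `α + iβ`. -/
def bqIm (v : ℍ[ℂ]) : ℍ[ℝ] := ⟨v.re.im, v.imI.im, v.imJ.im, v.imK.im⟩

@[simp] lemma re_bqIm (v : ℍ[ℂ]) : (bqIm v).re = v.re.im := rfl
@[simp] lemma imI_bqIm (v : ℍ[ℂ]) : (bqIm v).imI = v.imI.im := rfl
@[simp] lemma imJ_bqIm (v : ℍ[ℂ]) : (bqIm v).imJ = v.imJ.im := rfl
@[simp] lemma imK_bqIm (v : ℍ[ℂ]) : (bqIm v).imK = v.imK.im := rfl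

def IsMinquat (v : ℍ[ℂ]) : Prop := cstar v = star v

lemma isMinquat_iff {v : ℍ[ℂ]} :
    IsMinquat v ↔ v.re.im = 0 ∧ v.imI.re = 0 ∧ v.imJ.re = 0 ∧ v.imK.re = 0 := by
  simp [IsMinquat, Quaternion.ext_iff, Complex.ext_iff, neg_eq_self, self_eq_neg]

lemma isMinquat_mq (v₀ : ℝ) {w : ℍ[ℝ]} (hw : w.re = 0) : IsMinquat (mq v₀ w) := by
  simp [isMinquat_iff, hw]

lemma IsMinquat.Tq {v : ℍ[ℂ]} (hv : IsMinquat v) (q : ℍ[ℂ]) : IsMinquat (Tq q v) := by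
  rw [IsMinquat, _root_.Tq, cstar_mul, cstar_mul, cstar_star, cstar_cstar, hv,
    star_mul, star_mul, star_star, mul_assoc]

lemma IsMinquat.re_bqIm {v : ℍ[ℂ]} (hv : IsMinquat v) : (bqIm v).re = 0 :=
  (isMinquat_iff.1 hv).1

lemma IsMinquat.eq_mq {v : ℍ[ℂ]} (hv : IsMinquat v) : v = mq v.re.re (bqIm v) := by
  obtain ⟨hre, hi, hj, hk⟩ := isMinquat_iff.1 hv
  ext <;> simp [Complex.ext_iff, hre, hi, hj, hk]

theorem Tq_preserves_minquats_general (q : Quaternion ℂ)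
    (v₀ : ℝ) (w : Quaternion ℝ) (hw : w.re = 0) :
    ∃ (v₀' : ℝ) (w' : Quaternion ℝ), w'.re = 0 ∧ Tq q (mq v₀ w) = mq v₀' w' := by
  have h := (isMinquat_mq v₀ hw).Tq q
  exact ⟨_, _, h.re_bqIm, h.eq_mq⟩

/-- If Q(q) = 1 and v is a minquat, then T_q(v) = q·v·conj(q*) is again a minquat. -/
theorem Tq_preserves_minquats (q : Quaternion ℂ) (hq : q * star q = 1)
    (v₀ : ℝ) (w : Quaternion ℝ) (hw : w.re = 0) :
    ∃ (v₀' : ℝ) (w' : Quaternion ℝ), w'.re = 0 ∧ Tq q (mq v₀ w) = mq v₀' w' :=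
  Tq_preserves_minquats_general q v₀ w hw
end
end

section
/- For any biquaternion q with Q(q) = 1 and any minquats v, w, the transformation T_q(x) = q·x·conj(q*) preserves the symmetric bilinear form ⟨v,w⟩ := Sc(v·conj(w)): one has ⟨T_q(v), T_q(w)⟩ = ⟨v,w⟩. -/
/-!
Since `conj(q*) q* = (conj(q) q)* = 1`, the middle factors cancel in
`T_q(v) conj(T_q(w)) = q v conj(q*) q* conj(w) conj(q)`, leaving
`q (v conj(w)) conj(q)` with `conj(q) q = 1`; the scalar part is a trace
(`Sc(ab) = Sc(ba)`), hence invariant under this conjugation.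
-/

noncomputable section

theorem Quaternion.re_mul_comm {R : Type*} [CommRing R] (a b : Quaternion R) :
    (a * b).re = (b * a).re := by
  simp only [Quaternion.re_mul]
  ring

theorem cstar_mul (a b : Quaternion ℂ) : cstar (a * b) = cstar a * cstar b := by
  ext <;> simp only [Quaternion.re_mul, Quaternion.imI_mul, Quaternion.imJ_mul,
    Quaternion.imK_mul] <;> simp [cstar]

theorem cstar_star (a : Quaternion ℂ) : cstar (star a) = star (cstar a) := by
  ext <;> simp only [Quaternion.re_star, Quaternion.imI_star, Quaternion.imJ_star,
    Quaternion.imK_star] <;> simp [cstar]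

theorem cstar_one : cstar 1 = 1 := by
  ext <;> simp [cstar, Quaternion.re_one, Quaternion.imI_one, Quaternion.imJ_one,
    Quaternion.imK_one]

theorem star_cstar_mul_cstar_of_mul_star_eq_one {q : Quaternion ℂ} (hq : q * star q = 1) :
    star (cstar q) * cstar q = 1 := by
  rw [← cstar_star, ← cstar_mul, star_comm_self, hq, cstar_one]

theorem Tq_mul_star_Tq (q v w : Quaternion ℂ) :
    Tq q v * star (Tq q w) = q * (v * (star (cstar q) * cstar q) * star w) * star q := by
  simp only [Tq, star_mul, star_star]
  noncomm_ring

theorem re_Tq_mul_star_Tq {q : Quaternion ℂ} (hq : q * star q = 1) (v w : Quaternion ℂ) :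
    (Tq q v * star (Tq q w)).re = (v * star w).re := by
  rw [Tq_mul_star_Tq, star_cstar_mul_cstar_of_mul_star_eq_one hq, mul_one,
    Quaternion.re_mul_comm, ← mul_assoc, star_comm_self, hq, one_mul]

theorem Tq_preserves_bilinear_form_general (q : Quaternion ℂ) (hq : q * star q = 1)
    (v₀ : ℝ) (v : Quaternion ℝ)
    (w₀ : ℝ) (w : Quaternion ℝ) :
    (Tq q (mq v₀ v) * star (Tq q (mq w₀ w))).re = (mq v₀ v * star (mq w₀ w)).re :=
  re_Tq_mul_star_Tq hq _ _

/-- T_q preserves the bilinear form ⟨v,w⟩ = Sc(v·conj(w)) on minquats. -/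
theorem Tq_preserves_bilinear_form (q : Quaternion ℂ) (hq : q * star q = 1)
    (v₀ : ℝ) (v : Quaternion ℝ) (hv : v.re = 0)
    (w₀ : ℝ) (w : Quaternion ℝ) (hw : w.re = 0) :
    (Tq q (mq v₀ v) * star (Tq q (mq w₀ w))).re = (mq v₀ v * star (mq w₀ w)).re :=
  Tq_preserves_bilinear_form_general q hq v₀ v w₀ w
end
end

section
/- Let q = cos(iθ) + q̂·sin(iθ) = cosh(θ) + i·q̂·sinh(θ) be a unit-norm minquat biquaternion with q̂ a unit pure real quaternion, and v = v₀ + i·w a minquat. Then T_q(v) = q·v·q has time component v₀·cosh(2θ) + ⟨w, q̂⟩·sinh(2θ) and space component w + 2⟨w,q̂⟩·sinh²(θ)·q̂ + v₀·sinh(2θ)·q̂, i.e. T_q is a Lorentz boost with rapidity 2θ in direction q̂. -/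
/-!
With `U = i·q̂` and `W = i·w`, centrality of `i` and `i² = -1` turn the quaternion identities
`q̂² = -1` and `q̂w + wq̂ = -2⟨w, q̂⟩` into `U² = 1` and `UW + WU = 2⟨w, q̂⟩`. These two relations
alone reduce `(cosh θ + sinh θ·U)(v₀ + W)(cosh θ + sinh θ·U)` to the boost formula, using
`cosh² θ - sinh² θ = 1` and the double-angle formulas. None of this needs more of `ℍ(ℂ)` than
an algebra containing `ℍ` and a central square root of `-1`.
-/

noncomputable section

open Quaternion

lemma lorentz_boost {A : Type*} [Ring A] [Algebra ℝ A] {u x : A} {d : ℝ} (hu : u * u = 1)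
    (hanti : u * x + x * u = (2 * d) • 1) (θ a : ℝ) :
    (Real.cosh θ • 1 + Real.sinh θ • u) * (a • 1 + x) * (Real.cosh θ • 1 + Real.sinh θ • u) =
      (a * Real.cosh (2 * θ) + d * Real.sinh (2 * θ)) • 1 +
        (x + (2 * d * Real.sinh θ ^ 2) • u + (a * Real.sinh (2 * θ)) • u) := by
  have hux : u * x = (2 * d) • 1 - x * u := eq_sub_of_add_eq hanti
  have hxu : x * u = (2 * d) • 1 - u * x := eq_sub_of_add_eq' hanti
  have hsand : u * x * u = (2 * d) • u - x := by
    rw [hux, sub_mul, mul_assoc, hu, smul_mul_assoc, one_mul, mul_one]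
  -- after expansion only the monomials `1`, `u`, `x`, `u * x` survive
  simp only [add_mul, mul_add, smul_mul_assoc, mul_smul_comm, one_mul, mul_one, smul_smul,
    smul_add, ← mul_assoc, hu, hxu, hsand, smul_sub, Real.cosh_two_mul, Real.sinh_two_mul]
  linear_combination (norm := module) Real.cosh_sq_sub_sinh_sq θ • x

lemma dotV_comm (p q : ℍ[ℝ]) : dotV p q = dotV q p := by
  simp only [dotV]; ring

lemma mul_add_mul_of_re_eq_zero {p q : ℍ[ℝ]} (hp : p.re = 0) (hq : q.re = 0) :
    p * q + q * p = -(2 * dotV p q) • 1 := by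
  ext <;> simp [dotV, hp, hq] <;> ring

lemma dotV_self_of_re_eq_zero {u : ℍ[ℝ]} (hu : u.re = 0) (hu1 : ‖u‖ = 1) : dotV u u = 1 := by
  have h := normSq_def' u
  rw [normSq_eq_norm_mul_self, hu1, hu] at h
  simp only [dotV]; linear_combination -h

lemma mul_self_of_re_eq_zero {u : ℍ[ℝ]} (hu : u.re = 0) (hu1 : ‖u‖ = 1) : u * u = -1 := by
  have hd := dotV_self_of_re_eq_zero hu hu1
  simp only [dotV] at hd
  ext
  · simp [hu]; linear_combination -hd
  all_goals simp [hu]; ring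

lemma mul_mul_mul_eq_neg_of_central {A : Type*} [Ring A] {i : A} (hi : i * i = -1)
    (hic : ∀ x, Commute i x) (x y : A) : i * x * (i * y) = -(x * y) := by
  rw [mul_assoc, (hic x).symm.left_comm, ← mul_assoc, hi, neg_one_mul]

theorem boost_formula_of_central {A : Type*} [Ring A] [Algebra ℝ A] (ι : ℍ[ℝ] →ₐ[ℝ] A) {i : A}
    (hi : i * i = -1) (hic : ∀ x, Commute i x) {qh w : ℍ[ℝ]} (hqh : qh.re = 0)
    (hqh1 : ‖qh‖ = 1) (hw : w.re = 0) (θ v₀ : ℝ) :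
    (algebraMap ℝ A (Real.cosh θ) + i * ι (Real.sinh θ • qh)) * (algebraMap ℝ A v₀ + i * ι w) *
        (algebraMap ℝ A (Real.cosh θ) + i * ι (Real.sinh θ • qh)) =
      algebraMap ℝ A (v₀ * Real.cosh (2 * θ) + dotV w qh * Real.sinh (2 * θ)) +
        i * ι (w + (2 * dotV w qh * Real.sinh θ ^ 2) • qh + (v₀ * Real.sinh (2 * θ)) • qh) := by
  have hU : i * ι qh * (i * ι qh) = 1 := by
    rw [mul_mul_mul_eq_neg_of_central hi hic, ← map_mul, mul_self_of_re_eq_zero hqh hqh1,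
      map_neg, map_one, neg_neg]
  have hanti : i * ι qh * (i * ι w) + i * ι w * (i * ι qh) = (2 * dotV w qh) • 1 := by
    rw [mul_mul_mul_eq_neg_of_central hi hic, mul_mul_mul_eq_neg_of_central hi hic, ← neg_add,
      ← map_mul, ← map_mul, ← map_add, mul_add_mul_of_re_eq_zero hqh hw, dotV_comm, map_smul,
      map_one, neg_smul, neg_neg]
  simp only [Algebra.algebraMap_eq_smul_one, map_add ι, map_smul ι, mul_add i, mul_smul_comm _ i]
  exact lorentz_boost hU hanti θ v₀

@[simp] lemma re_toC (a : ℍ[ℝ]) : (toC a).re = a.re := rfl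
@[simp] lemma imI_toC (a : ℍ[ℝ]) : (toC a).imI = a.imI := rfl
@[simp] lemma imJ_toC (a : ℍ[ℝ]) : (toC a).imJ = a.imJ := rfl
@[simp] lemma imK_toC (a : ℍ[ℝ]) : (toC a).imK = a.imK := rfl

def toCAlgHom : ℍ[ℝ] →ₐ[ℝ] ℍ[ℂ] where
  toFun := toC
  map_one' := by ext <;> simp
  map_mul' _ _ := by ext <;> simp
  map_zero' := by ext <;> simp
  map_add' _ _ := by ext <;> simp
  commutes' _ := by ext <;> simp [Algebra.algebraMap_eq_smul_one]

lemma qI_mul_qI : qI * qI = -1 := by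
  rw [qI, ← coe_mul, Complex.I_mul_I, coe_neg, coe_one]

/-- A unit minquat q = cosh θ + i·q̂·sinh θ acts on minquats as the Lorentz boost of
    rapidity 2θ in direction q̂. -/
theorem boost_formula (θ v₀ : ℝ) (qh w : Quaternion ℝ)
    (hqh : qh.re = 0) (hqh1 : ‖qh‖ = 1) (hw : w.re = 0) :
    mq (Real.cosh θ) (Real.sinh θ • qh) * mq v₀ w * mq (Real.cosh θ) (Real.sinh θ • qh) =
      mq (v₀ * Real.cosh (2*θ) + dotV w qh * Real.sinh (2*θ))
        (w + (2 * dotV w qh * Real.sinh θ ^ 2) • qh + (v₀ * Real.sinh (2*θ)) • qh) := by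
  -- `mq a w` unfolds to `algebraMap ℝ ℍ[ℂ] a + qI * toCAlgHom w`
  exact boost_formula_of_central toCAlgHom qI_mul_qI (fun x => coe_commutes _ x) hqh hqh1 hw θ v₀
end
end

section
/- For split biquaternions: let q_b = cos(φ/2) + j·u·sin(φ/2) with u a unit pure real quaternion, and v = v₀ + j·w with v₀ ∈ ℝ and w a pure real quaternion. Then T_{q_b}(v) = q_b·v·q_b = v₀' + j·w' with v₀' = v₀cos(φ) − ⟨w,u⟩sin(φ) and w' = w − 2⟨w,u⟩sin²(φ/2)·u + v₀sin(φ)·u; in particular T_{q_b} preserves the Euclidean norm v₀² + |w|² on ℝ⁴. -/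
noncomputable section

/-- The split numbers 𝕊 = ℝ[j]/(j²−1), realized as ℝ × ℝ (with j = (1,-1)). -/
abbrev SplitNum := ℝ × ℝ

/-- Embedding of the real quaternions into the split biquaternions ℍ(𝕊). -/
def toS (a : Quaternion ℝ) : Quaternion SplitNum :=
  ⟨(a.re, a.re), (a.imI, a.imI), (a.imJ, a.imJ), (a.imK, a.imK)⟩

/-- The central unit j of the split biquaternions, j² = 1. -/
def jS : Quaternion SplitNum := (((1, -1) : SplitNum) : Quaternion SplitNum)

/-- The split biquaternion α + jβ determined by two real quaternions. -/
def bqS (a b : Quaternion ℝ) : Quaternion SplitNum := toS a + jS * toS b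

/-- The element v₀ + j·w with v₀ ∈ ℝ, w a real quaternion. -/
def mqS (v₀ : ℝ) (w : Quaternion ℝ) : Quaternion SplitNum :=
  toS ((v₀ : Quaternion ℝ)) + jS * toS w

/-!
Write a split biquaternion as `α + jβ` with `α, β` real quaternions; since `j` is central with
`j² = 1`, `(α + jβ)(γ + jδ) = (αγ + βδ) + j(αδ + βγ)`. For `u` a pure unit quaternion and `w`
pure, `u² = -1`, `uw + wu = -2⟨w, u⟩` and `uwu = w - 2⟨w, u⟩u`, so `q_b v q_b` collapses to the
stated formula once the half-angle identities are applied. The map is the rotation by `φ` of the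
plane spanned by `1` and `j u`, fixing its orthogonal complement, hence it preserves the norm.
-/

open Real Quaternion RealInnerProductSpace

@[simp] theorem toS_re (a : Quaternion ℝ) : (toS a).re = (a.re, a.re) := rfl
@[simp] theorem toS_imI (a : Quaternion ℝ) : (toS a).imI = (a.imI, a.imI) := rfl
@[simp] theorem toS_imJ (a : Quaternion ℝ) : (toS a).imJ = (a.imJ, a.imJ) := rfl
@[simp] theorem toS_imK (a : Quaternion ℝ) : (toS a).imK = (a.imK, a.imK) := rfl

theorem toS_add (a b : Quaternion ℝ) : toS (a + b) = toS a + toS b := by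
  ext <;> simp

theorem toS_mul (a b : Quaternion ℝ) : toS (a * b) = toS a * toS b := by
  ext <;> simp

theorem jS_mul_self : jS * jS = 1 := by
  rw [jS, ← Quaternion.coe_mul]
  ext <;> simp

theorem commute_jS (x : Quaternion SplitNum) : Commute jS x :=
  Quaternion.coe_commutes _ _

theorem bqS_mul (a b c d : Quaternion ℝ) :
    bqS a b * bqS c d = bqS (a * c + b * d) (a * d + b * c) := by
  have hA : toS a * (jS * toS d) = jS * (toS a * toS d) := (commute_jS _).symm.left_comm _
  have hB : jS * toS b * (jS * toS d) = toS b * toS d := by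
    rw [mul_assoc, (commute_jS _).symm.left_comm, ← mul_assoc, jS_mul_self, one_mul]
  simp only [bqS, toS_add, toS_mul, mul_add, add_mul, hA, hB, mul_assoc]
  abel

theorem mqS_eq_bqS (v₀ : ℝ) (w : Quaternion ℝ) : mqS v₀ w = bqS v₀ w := rfl

theorem Quaternion.real_inner_eq_dotV {w : Quaternion ℝ} (hw : w.re = 0) (u : Quaternion ℝ) :
    ⟪w, u⟫ = dotV w u := by
  simp [Quaternion.inner_def, dotV, hw]

theorem Quaternion.mul_add_mul_eq_neg_two_dotV {u w : Quaternion ℝ} (hu : u.re = 0)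
    (hw : w.re = 0) :
    u * w + w * u = (-2 * dotV w u : ℝ) := by
  ext <;> simp [dotV, hu, hw] <;> ring

theorem Quaternion.mul_self_eq_neg_one_of_re_eq_zero {u : Quaternion ℝ} (hu : u.re = 0)
    (hu1 : ‖u‖ = 1) : u * u = -1 := by
  rw [← sq, sq_eq_neg_normSq.2 hu, normSq_eq_norm_mul_self, hu1, mul_one, coe_one]

theorem Quaternion.mul_mul_eq_sub_two_dotV_smul {u w : Quaternion ℝ} (hu : u.re = 0) (hu1 : ‖u‖ = 1)
    (hw : w.re = 0) : u * (w * u) = w - (2 * dotV w u) • u := by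
  rw [eq_sub_of_add_eq' (mul_add_mul_eq_neg_two_dotV hu hw), mul_sub, ← mul_assoc,
    mul_self_eq_neg_one_of_re_eq_zero hu hu1, mul_coe_eq_smul, neg_one_mul, sub_neg_eq_add]
  module

theorem bqS_mul_bqS_mul_bqS (c s v₀ : ℝ) {u w : Quaternion ℝ} (hu : u.re = 0) (hu1 : ‖u‖ = 1)
    (hw : w.re = 0) :
    bqS c (s • u) * bqS v₀ w * bqS c (s • u) =
      bqS ((c ^ 2 - s ^ 2) * v₀ - 2 * c * s * dotV w u : ℝ)
        ((c ^ 2 + s ^ 2) • w + (2 * c * s * v₀ - 2 * s ^ 2 * dotV w u) • u) := by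
  have hcoe (r : ℝ) : (r : Quaternion ℝ) = r • 1 := Algebra.algebraMap_eq_smul_one r
  have h1 := mul_add_mul_eq_neg_two_dotV hu hw
  have h2 := mul_self_eq_neg_one_of_re_eq_zero hu hu1
  have h3 := mul_mul_eq_sub_two_dotV_smul hu hu1 hw
  rw [hcoe] at h1
  rw [bqS_mul, bqS_mul]
  congr 1
  · simp only [hcoe, smul_mul_assoc, mul_smul_comm, smul_smul, add_mul, one_mul, mul_one]
    linear_combination (norm := module) (s * c) • h1 + (s ^ 2 * v₀) • h2
  · simp only [coe_mul_eq_smul, mul_coe_eq_smul, smul_mul_assoc, mul_smul_comm, smul_smul,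
      add_mul, mul_assoc]
    linear_combination (norm := module) (s ^ 2) • h3

theorem sq_add_norm_sq_rotate {E : Type*} [NormedAddCommGroup E] [InnerProductSpace ℝ E] {u : E}
    (hu : ‖u‖ = 1) (v₀ φ : ℝ) (w : E) :
    (v₀ * cos φ - ⟪w, u⟫ * sin φ) ^ 2 +
        ‖w - (2 * ⟪w, u⟫ * sin (φ / 2) ^ 2) • u + (v₀ * sin φ) • u‖ ^ 2 =
      v₀ ^ 2 + ‖w‖ ^ 2 := by
  have hhalf : 2 * sin (φ / 2) ^ 2 = 1 - cos φ := by
    have h := cos_two_mul' (φ / 2)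
    rw [mul_div_cancel₀ φ two_ne_zero] at h
    linear_combination h + cos_sq_add_sin_sq (φ / 2)
  have hsum : w - (2 * ⟪w, u⟫ * sin (φ / 2) ^ 2) • u + (v₀ * sin φ) • u =
      w + (v₀ * sin φ - ⟪w, u⟫ * (1 - cos φ)) • u := by
    rw [← hhalf]; module
  rw [hsum, norm_add_sq_real, real_inner_smul_right, norm_smul, hu, mul_one, Real.norm_eq_abs,
    sq_abs]
  linear_combination (v₀ ^ 2 + ⟪w, u⟫ ^ 2) * sin_sq_add_cos_sq φ

/-- A unit split biquaternion q_b = cos(φ/2) + j·u·sin(φ/2) acts on v = v₀ + j·w as a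
    simple rotation of ℝ⁴; in particular it preserves the Euclidean norm v₀² + |w|². -/
theorem simple_rotation_formula (φ v₀ : ℝ) (u w : Quaternion ℝ)
    (hu : u.re = 0) (hu1 : ‖u‖ = 1) (hw : w.re = 0) :
    mqS (Real.cos (φ/2)) (Real.sin (φ/2) • u) * mqS v₀ w *
        mqS (Real.cos (φ/2)) (Real.sin (φ/2) • u) =
      mqS (v₀ * Real.cos φ - dotV w u * Real.sin φ)
        (w - (2 * dotV w u * Real.sin (φ/2) ^ 2) • u + (v₀ * Real.sin φ) • u) ∧
    (v₀ * Real.cos φ - dotV w u * Real.sin φ) ^ 2 +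
        ‖w - (2 * dotV w u * Real.sin (φ/2) ^ 2) • u + (v₀ * Real.sin φ) • u‖ ^ 2 =
      v₀ ^ 2 + ‖w‖ ^ 2 := by
  refine ⟨?_, real_inner_eq_dotV hw u ▸ sq_add_norm_sq_rotate hu1 v₀ φ w⟩
  have hcos : cos φ = cos (φ / 2) ^ 2 - sin (φ / 2) ^ 2 := by
    rw [← cos_two_mul', mul_div_cancel₀ φ two_ne_zero]
  have hsin : sin φ = 2 * sin (φ / 2) * cos (φ / 2) := by
    rw [← sin_two_mul, mul_div_cancel₀ φ two_ne_zero]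
  simp only [mqS_eq_bqS]
  rw [bqS_mul_bqS_mul_bqS _ _ _ hu hu1 hw, cos_sq_add_sin_sq, one_smul, hcos, hsin]
  congr 1
  · congr 1
    ring
  · module
end
end
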